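/- For every Δt₀ ∈ (0,1] there exists a constant C(Δt₀) ∈ (0,∞) such that |Ψ_t′(z)| ≤ C(Δt₀)(1 + z²) for all t ∈ [0,Δt₀] and all z ∈ ℝ. -/

import Mathlib

/-!
Rescaling by `e^{-t}` shows `Φ_t(z) = e^t z / √(1 + c z²)` with `c = e^{2t} - 1 ∈ [0, 2t e^{2t}]`,
so `Φ_t′(z) = e^t s⁻³` with `s = √(1 + c z²) ≥ 1`. Then `Φ_t′(z) - 1 = (e^t - 1) s⁻³ - (1 - s⁻³)`
is a difference of two nonnegative terms, bounded by `t e^t` and `(3/2) c z²` respectively.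
Hence `|Ψ_t′(z)| = |Φ_t′(z) - 1| / t ≤ 3 e^{2t} (1 + z²)`, and `C = 3 e^{2 Δt₀}` works.
-/

noncomputable section

/-- The flow map `Φ_t(z) = z / √(z² + (1 - z²) e^{-2t})` of the ODE `ż = z - z³`. -/
def Phi (t z : ℝ) : ℝ := z / Real.sqrt (z ^ 2 + (1 - z ^ 2) * Real.exp (-2 * t))

/-- `Ψ_t(z) = (Φ_t(z) - z)/t` for `t > 0`, and `Ψ_0(z) = z - z³`. -/
def Psi (t z : ℝ) : ℝ := if t = 0 then z - z ^ 3 else (Phi t z - z) / t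

open Real

lemma exp_sub_one_le_mul_exp (t : ℝ) : exp t - 1 ≤ t * exp t := by
  have h := add_one_le_exp (-t)
  have h' : exp (-t) * exp t = 1 := by rw [← exp_add, neg_add_cancel, exp_zero]
  nlinarith [exp_pos t]

lemma one_sub_inv_pow_three_le {s : ℝ} (hs : 1 ≤ s) : 1 - (s ^ 3)⁻¹ ≤ 3 / 2 * (s ^ 2 - 1) := by
  have hs0 : 0 < s := by linarith
  calc 1 - (s ^ 3)⁻¹ = (s ^ 3 - 1) / s ^ 3 := by field_simp
    _ ≤ 3 / 2 * (s ^ 2 - 1) := by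
      rw [div_le_iff₀ (by positivity)]
      nlinarith [mul_nonneg (sub_nonneg.mpr hs) (sub_nonneg.mpr hs), one_le_pow₀ (n := 3) hs,
        mul_nonneg (mul_nonneg (sub_nonneg.mpr hs) (sub_nonneg.mpr hs)) hs0.le]

lemma hasDerivAt_div_sqrt_one_add_mul_sq {c z : ℝ} (h : 0 < 1 + c * z ^ 2) :
    HasDerivAt (fun y => y / √(1 + c * y ^ 2)) (√(1 + c * z ^ 2) ^ 3)⁻¹ z := by
  have hinner : HasDerivAt (fun y => 1 + c * y ^ 2) (c * (2 * z)) z := by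
    simpa using ((hasDerivAt_pow 2 z).const_mul c).const_add 1
  have hs : 0 < √(1 + c * z ^ 2) := sqrt_pos.mpr h
  refine ((hasDerivAt_id' z).div (hinner.sqrt h.ne') hs.ne').congr_deriv ?_
  have hsq : √(1 + c * z ^ 2) ^ 2 = 1 + c * z ^ 2 := sq_sqrt h.le
  field_simp
  rw [hsq]
  ring

lemma Phi_eq (t z : ℝ) : Phi t z = exp t * (z / √(1 + (exp (2 * t) - 1) * z ^ 2)) := by
  have hD : z ^ 2 + (1 - z ^ 2) * exp (-2 * t)
      = exp (-t) ^ 2 * (1 + (exp (2 * t) - 1) * z ^ 2) := by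
    have hsq : exp (-t) ^ 2 = exp (-2 * t) := by rw [← exp_nat_mul]; ring_nf
    have hinv : exp (-2 * t) * exp (2 * t) = 1 := by rw [← exp_add]; simp
    rw [hsq]
    linear_combination (-z ^ 2) * hinv
  rw [Phi, hD, sqrt_mul (sq_nonneg _), sqrt_sq (exp_pos _).le, exp_neg]
  field_simp

lemma hasDerivAt_Phi {t : ℝ} (ht : 0 ≤ t) (z : ℝ) :
    HasDerivAt (Phi t) (exp t * (√(1 + (exp (2 * t) - 1) * z ^ 2) ^ 3)⁻¹) z := by
  have hc : 0 ≤ exp (2 * t) - 1 := sub_nonneg.mpr (one_le_exp (by linarith))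
  have hpos : 0 < 1 + (exp (2 * t) - 1) * z ^ 2 := by positivity
  rw [show Phi t = _ from funext (Phi_eq t)]
  exact (hasDerivAt_div_sqrt_one_add_mul_sq hpos).const_mul _

lemma abs_deriv_Phi_sub_one_le {t : ℝ} (ht : 0 ≤ t) (z : ℝ) :
    |deriv (Phi t) z - 1| ≤ 3 * exp (2 * t) * t * (1 + z ^ 2) := by
  set c := exp (2 * t) - 1
  set s := √(1 + c * z ^ 2)
  have hc : 0 ≤ c := sub_nonneg.mpr (one_le_exp (by linarith))
  have hc_le : c ≤ 2 * t * exp (2 * t) := exp_sub_one_le_mul_exp (2 * t)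
  have hs : 1 ≤ s := one_le_sqrt.mpr (by nlinarith [sq_nonneg z])
  have hs_sq : s ^ 2 = 1 + c * z ^ 2 := sq_sqrt (by positivity)
  have hinv : 0 < (s ^ 3)⁻¹ := by positivity
  have hinv_le : (s ^ 3)⁻¹ ≤ 1 := inv_le_one_of_one_le₀ (one_le_pow₀ hs)
  have hexp_term : (exp t - 1) * (s ^ 3)⁻¹ ≤ t * exp (2 * t) := by
    calc (exp t - 1) * (s ^ 3)⁻¹ ≤ exp t - 1 :=
          mul_le_of_le_one_right (sub_nonneg.mpr (one_le_exp ht)) hinv_le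
      _ ≤ t * exp t := exp_sub_one_le_mul_exp t
      _ ≤ t * exp (2 * t) := by gcongr; linarith
  have hinv_term : 1 - (s ^ 3)⁻¹ ≤ 3 * t * exp (2 * t) * z ^ 2 := by
    have := one_sub_inv_pow_three_le hs
    rw [hs_sq] at this
    nlinarith [mul_le_mul_of_nonneg_right hc_le (sq_nonneg z)]
  have hsplit : exp t * (s ^ 3)⁻¹ - 1 = (exp t - 1) * (s ^ 3)⁻¹ - (1 - (s ^ 3)⁻¹) := by ring
  have hexp_term_nonneg : 0 ≤ (exp t - 1) * (s ^ 3)⁻¹ :=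
    mul_nonneg (sub_nonneg.mpr (one_le_exp ht)) hinv.le
  have hte : 0 ≤ t * exp (2 * t) := mul_nonneg ht (exp_pos _).le
  have htez : 0 ≤ t * exp (2 * t) * z ^ 2 := mul_nonneg hte (sq_nonneg z)
  rw [(hasDerivAt_Phi ht z).deriv, hsplit, abs_le]
  constructor <;> linarith

lemma deriv_Psi_zero (z : ℝ) : deriv (Psi 0) z = 1 - 3 * z ^ 2 := by
  have hPsi : Psi 0 = fun y => y - y ^ 3 := funext fun y => if_pos rfl
  rw [hPsi]
  exact ((hasDerivAt_id' z).sub (hasDerivAt_pow 3 z)).deriv.trans (by norm_num)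

lemma deriv_Psi_of_pos {t : ℝ} (ht : 0 < t) (z : ℝ) :
    deriv (Psi t) z = (deriv (Phi t) z - 1) / t := by
  have hPsi : Psi t = fun y => (Phi t y - y) / t := funext fun y => if_neg ht.ne'
  rw [hPsi]
  exact (((hasDerivAt_Phi ht.le z).differentiableAt.hasDerivAt.sub
    (hasDerivAt_id' z)).div_const t).deriv

lemma abs_deriv_Psi_le {t : ℝ} (ht : 0 ≤ t) (z : ℝ) :
    |deriv (Psi t) z| ≤ 3 * exp (2 * t) * (1 + z ^ 2) := by
  rcases ht.eq_or_lt with rfl | ht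
  · rw [deriv_Psi_zero, mul_zero, exp_zero, mul_one, abs_le]
    constructor <;> nlinarith [sq_nonneg z]
  · rw [deriv_Psi_of_pos ht, abs_div, abs_of_pos ht, div_le_iff₀ ht]
    calc |deriv (Phi t) z - 1| ≤ 3 * exp (2 * t) * t * (1 + z ^ 2) :=
          abs_deriv_Phi_sub_one_le ht.le z
      _ = 3 * exp (2 * t) * (1 + z ^ 2) * t := by ring

theorem psi_deriv_quadratic_growth_general (Δt₀ : ℝ) :
    ∃ C : ℝ, 0 < C ∧ ∀ t ∈ Set.Icc (0 : ℝ) Δt₀, ∀ z : ℝ,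
      |deriv (Psi t) z| ≤ C * (1 + z ^ 2) := by
  refine ⟨3 * exp (2 * Δt₀), by positivity, ?_⟩
  rintro t ⟨ht, htΔ⟩ z
  calc |deriv (Psi t) z| ≤ 3 * exp (2 * t) * (1 + z ^ 2) := abs_deriv_Psi_le ht z
    _ ≤ 3 * exp (2 * Δt₀) * (1 + z ^ 2) := by gcongr

/-- For every `Δt₀ ∈ (0,1]` there exists `C(Δt₀) ∈ (0,∞)` such that
`|Ψ_t′(z)| ≤ C(Δt₀) (1 + z²)` for all `t ∈ [0, Δt₀]` and all `z ∈ ℝ`. -/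
theorem psi_deriv_quadratic_growth (Δt₀ : ℝ) (hΔt₀ : Δt₀ ∈ Set.Ioc (0 : ℝ) 1) :
    ∃ C : ℝ, 0 < C ∧ ∀ t ∈ Set.Icc (0 : ℝ) Δt₀, ∀ z : ℝ,
      |deriv (Psi t) z| ≤ C * (1 + z ^ 2) :=
  psi_deriv_quadratic_growth_general Δt₀

end
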